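/- For fixed η ∈ ℝ, the free energy F(·,η) is sequentially lower semicontinuous with respect to weak L¹ convergence: if f_j ∈ P(S²) and f_j ⇀ f weakly in L¹(S²) with f ∈ P(S²), then liminf_{j→∞} F(f_j,η) ≥ F(f,η). -/

import Mathlib

/-
Common setting for the formalisation of
"An analysis of equilibria in dense nematic liquid crystals" (J. M. Taylor).

* `V3` is ℝ³ (as a Euclidean space), `sph` is the unit sphere S²,
  and `μS` is the 2-dimensional Hausdorff (surface) measure restricted to S².
* `IsProb f` says `f ∈ P(S²)`.
* `FE f η` is the free energy `F(f,η) ∈ ℝ ∪ {+∞}` (realised as `EReal`),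
  with the conventions `0 ln 0 = 0`, `0 ⬝ (+∞) = 0` and `-ln x = +∞` for `x ≤ 0`:
  the value is the real integral whenever the argument of the logarithm is a.e.
  positive on `{f ≠ 0}` and the integrand is integrable, and `+∞` otherwise.
-/

open MeasureTheory Matrix Filter
open scoped ENNReal Topology Classical

noncomputable section

abbrev V3 : Type := EuclideanSpace ℝ (Fin 3)

/-- The unit sphere S² in ℝ³. -/
def sph : Set V3 := Metric.sphere (0 : V3) 1

/-- The 2-dimensional Hausdorff (surface) measure on S². -/
def μS : Measure V3 := (μH[2]).restrict sph

abbrev Mat3 : Type := Matrix (Fin 3) (Fin 3) ℝ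

/-- Membership in Sym₀(3): real symmetric traceless 3×3 matrices. -/
def Sym0 (Q : Mat3) : Prop := Q.IsSymm ∧ Q.trace = 0

/-- The Frobenius inner product `A·B = trace (A*B)` (on symmetric matrices). -/
def mdot (A B : Mat3) : ℝ := (A * B).trace

/-- The quadratic form `p ↦ Qp·p`. -/
def qf (Q : Mat3) (p : V3) : ℝ := ∑ i, ∑ j, Q i j * p i * p j

/-- The smallest eigenvalue of a symmetric matrix, via Rayleigh quotients on S². -/
def vmin (Q : Mat3) : ℝ := ⨅ p : sph, qf Q (p : V3)

/-- `f ∈ P(S²)`. -/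
def IsProb (f : V3 → ℝ) : Prop :=
  Integrable f μS ∧ (∀ᵐ p ∂μS, 0 ≤ f p) ∧ ∫ p, f p ∂μS = 1

/-- The interaction term `p ↦ ∫_{S²} ((p·q)² − 1/3) f(q) dq`. -/
def Kf (f : V3 → ℝ) (p : V3) : ℝ :=
  ∫ q, ((∑ i, p i * q i) ^ 2 - 1 / 3) * f q ∂μS

/-- The free energy `F(f,η) ∈ ℝ ∪ {+∞}`. -/
def FE (f : V3 → ℝ) (η : ℝ) : EReal :=
  if (∀ᵐ p ∂μS, f p ≠ 0 → η < Kf f p) ∧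
      Integrable (fun p => f p * Real.log (f p) - f p * Real.log (Kf f p - η)) μS
  then ((∫ p, f p * Real.log (f p) - f p * Real.log (Kf f p - η) ∂μS : ℝ) : EReal)
  else ⊤

/-- The Q-tensor `Q(f) = ∫_{S²} (p⊗p − (1/3)I) f(p) dp`. -/
def Qten (f : V3 → ℝ) : Mat3 :=
  Matrix.of fun i j => ∫ p, f p * (p i * p j - if i = j then (1 : ℝ) / 3 else 0) ∂μS

/-- The macroscopic energy `J(Q,η) = inf_{f ∈ A(Q)} F(f,η)` (`= +∞` when `A(Q) = ∅`). -/
def Jfun (Q : Mat3) (η : ℝ) : EReal :=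
  sInf {y : EReal | ∃ f : V3 → ℝ, IsProb f ∧ Qten f = Q ∧ FE f η = y}

/-- The dual objective `D(Q,λ,η) = λ·Q − ln ∫_{S²} exp(λp·p) max(Qp·p − η, 0) dp`. -/
def Dob (Q lam : Mat3) (η : ℝ) : ℝ :=
  mdot lam Q - Real.log (∫ p, Real.exp (qf lam p) * max (qf Q p - η) 0 ∂μS)

/-- The effective domain of `J(·,η)`. -/
def domJ (η : ℝ) : Set Mat3 :=
  {Q : Mat3 | Sym0 Q ∧ -(1/3) < vmin Q ∧ η < mdot Q Q}

/-- The matrix `∫_{S²} (f(p)/(Qp·p − η)) (p⊗p − (1/3)I) dp` (integrand `0` where `f` vanishes,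
by the junk-value conventions of division in Lean). -/
def Mmat (f : V3 → ℝ) (Q : Mat3) (η : ℝ) : Mat3 :=
  Matrix.of fun i j =>
    ∫ p, f p / (qf Q p - η) * (p i * p j - if i = j then (1 : ℝ) / 3 else 0) ∂μS

/-- The entropy `∫_{S²} f ln f ∈ ℝ ∪ {+∞}`. -/
def EntE (f : V3 → ℝ) : EReal :=
  if Integrable (fun p => f p * Real.log (f p)) μS
  then ((∫ p, f p * Real.log (f p) ∂μS : ℝ) : EReal)
  else ⊤

/-- The Ball–Majumdar singular potential `ψ_s(Q) = inf_{f ∈ A(Q)} ∫ f ln f`. -/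
def psiS (Q : Mat3) : EReal :=
  sInf {y : EReal | ∃ f : V3 → ℝ, IsProb f ∧ Qten f = Q ∧ EntE f = y}

/-- `f` is an `L^p`-local minimiser of `F(·,η)`. -/
def LpLocMin (pp : ℝ≥0∞) (η : ℝ) (f : V3 → ℝ) : Prop :=
  FE f η < ⊤ ∧ ∃ ε : ℝ, 0 < ε ∧ ∀ g : V3 → ℝ, IsProb g →
    eLpNorm (g - f) pp μS < ENNReal.ofReal ε → FE f η ≤ FE g η

/-!
Young's inequality `x (t + 1) - α eᵗ ≤ x ln x - x ln α`, with equality at `t = ln (x / α)`, gives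
`F(f,η) ≥ D_f(g) := ∫ f (g + 1) - (K f - η)⁺ e^g` for every bounded measurable `g`, where
`K f = Kf f`; monotone convergence along the truncations of `g = ln (f / (K f - η))` shows that
`F(·,η)` is the supremum of these dual functionals. For fixed `g`, `D_{f_j}(g) → D_f(g)`: the
first term by weak convergence, the second by dominated convergence, because `K f_j → K f`
pointwise on S² and `|K f_j| ≤ 1` there. A supremum of sequentially continuous functionals is
sequentially lower semicontinuous.

Finiteness of the surface measure comes from spherical coordinates, a Lipschitz map from a disc
of `ℝ²` onto S².
-/

open Real Set

lemma sum_sq_eq_one_of_mem_sph {x : V3} (hx : x ∈ sph) : ∑ i, x i ^ 2 = 1 := by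
  have h : ‖x‖ = 1 := by simpa [sph] using hx
  rw [EuclideanSpace.norm_eq, Real.sqrt_eq_one] at h
  simpa [Real.norm_eq_abs, sq_abs] using h

def sphCoord (u : ℝ × ℝ) : V3 := !₂[sin u.1 * cos u.2, sin u.1 * sin u.2, cos u.1]

lemma abs_mul_sub_mul_le {a b c d : ℝ} (hb : |b| ≤ 1) (hc : |c| ≤ 1) :
    |a * b - c * d| ≤ |a - c| + |b - d| := by
  calc |a * b - c * d| = |(a - c) * b + c * (b - d)| := by ring_nf
    _ ≤ |a - c| * |b| + |c| * |b - d| := by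
        rw [← abs_mul, ← abs_mul]; exact abs_add_le _ _
    _ ≤ |a - c| * 1 + 1 * |b - d| := by gcongr
    _ = |a - c| + |b - d| := by ring

lemma lipschitzWith_sphCoord : LipschitzWith 3 sphCoord := by
  refine LipschitzWith.of_dist_le_mul fun u v => ?_
  set d := dist u v
  have hd : 0 ≤ d := dist_nonneg
  have h1 : |u.1 - v.1| ≤ d := by rw [← Real.dist_eq]; exact le_max_left _ _
  have h2 : |u.2 - v.2| ≤ d := by rw [← Real.dist_eq]; exact le_max_right _ _
  have e1 : |sin u.1 * cos u.2 - sin v.1 * cos v.2| ≤ |2 * d| := by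
    have := abs_mul_sub_mul_le (a := sin u.1) (c := sin v.1) (d := cos v.2)
      (abs_cos_le_one u.2) (abs_sin_le_one v.1)
    rw [abs_of_nonneg (by positivity : (0 : ℝ) ≤ 2 * d)]
    linarith [abs_sin_sub_sin_le u.1 v.1, abs_cos_sub_cos_le u.2 v.2]
  have e2 : |sin u.1 * sin u.2 - sin v.1 * sin v.2| ≤ |2 * d| := by
    have := abs_mul_sub_mul_le (a := sin u.1) (c := sin v.1) (d := sin v.2)
      (abs_sin_le_one u.2) (abs_sin_le_one v.1)
    rw [abs_of_nonneg (by positivity : (0 : ℝ) ≤ 2 * d)]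
    linarith [abs_sin_sub_sin_le u.1 v.1, abs_sin_sub_sin_le u.2 v.2]
  have e3 : |cos u.1 - cos v.1| ≤ |d| := by
    rw [abs_of_nonneg hd]; linarith [abs_cos_sub_cos_le u.1 v.1]
  rw [EuclideanSpace.dist_eq, NNReal.coe_ofNat, Real.sqrt_le_left (by positivity)]
  simp only [sphCoord, Real.dist_eq, sq_abs, Fin.sum_univ_three, Matrix.cons_val_zero,
    Matrix.cons_val_one, Matrix.cons_val]
  nlinarith [sq_le_sq.mpr e1, sq_le_sq.mpr e2, sq_le_sq.mpr e3]

lemma sph_subset_image_sphCoord : sph ⊆ sphCoord '' Metric.closedBall 0 π := by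
  intro x hx
  have hsum := sum_sq_eq_one_of_mem_sph hx
  rw [Fin.sum_univ_three] at hsum
  set z : ℂ := ⟨x 0, x 1⟩
  have hx2 : |x 2| ≤ 1 := by
    rw [← sq_le_one_iff_abs_le_one]; nlinarith [sq_nonneg (x 0), sq_nonneg (x 1)]
  have hsin : sin (arccos (x 2)) = ‖z‖ := by
    rw [sin_arccos, Complex.norm_def, Complex.normSq_mk]
    congr 1; nlinarith
  refine ⟨(arccos (x 2), z.arg), ?_, ?_⟩
  · rw [mem_closedBall_zero_iff, Prod.norm_def, max_le_iff, Real.norm_eq_abs, Real.norm_eq_abs,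
      abs_of_nonneg (arccos_nonneg _), abs_le]
    exact ⟨arccos_le_pi _, (Complex.neg_pi_lt_arg z).le, Complex.arg_le_pi z⟩
  · ext i
    fin_cases i
    · simp [sphCoord, hsin, Complex.norm_mul_cos_arg, z]
    · simp [sphCoord, hsin, Complex.norm_mul_sin_arg, z]
    · simp [sphCoord, cos_arccos (abs_le.mp hx2).1 (abs_le.mp hx2).2]

instance : IsFiniteMeasure μS := by
  refine ⟨?_⟩
  rw [μS, Measure.restrict_apply_univ]
  calc μH[2] sph ≤ μH[2] (sphCoord '' Metric.closedBall 0 π) :=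
        measure_mono sph_subset_image_sphCoord
    _ ≤ 3 ^ (2 : ℝ) * μH[2] (Metric.closedBall (0 : ℝ × ℝ) π) :=
        lipschitzWith_sphCoord.hausdorffMeasure_image_le zero_le_two _
    _ < ⊤ := by
        rw [hausdorffMeasure_prod_real]
        exact ENNReal.mul_lt_top (by norm_num) measure_closedBall_lt_top

lemma measurableSet_sph : MeasurableSet sph := Metric.isClosed_sphere.measurableSet

lemma ae_mem_sph : ∀ᵐ p ∂μS, p ∈ sph := ae_restrict_mem measurableSet_sph

lemma abs_kernel_le_one {p q : V3} (hp : p ∈ sph) (hq : q ∈ sph) :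
    |(∑ i, p i * q i) ^ 2 - 1 / 3| ≤ 1 := by
  have h := Finset.sum_mul_sq_le_sq_mul_sq Finset.univ (fun i => p i) (fun i => q i)
  rw [sum_sq_eq_one_of_mem_sph hp, sum_sq_eq_one_of_mem_sph hq] at h
  rw [abs_le]
  constructor <;> nlinarith [sq_nonneg (∑ i, p i * q i)]

lemma measurable_Kf {f : V3 → ℝ} (hf : AEStronglyMeasurable f μS) : Measurable (Kf f) := by
  have h : Kf f = Kf (hf.mk f) :=
    funext fun p => integral_congr_ae (hf.ae_eq_mk.mono fun q hq => by simp only [hq])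
  rw [h]
  have hk : StronglyMeasurable fun x : V3 × V3 =>
      ((∑ i, x.1 i * x.2 i) ^ 2 - 1 / 3) * hf.mk f x.2 :=
    (Continuous.stronglyMeasurable (by fun_prop)).mul
      (hf.stronglyMeasurable_mk.comp_measurable measurable_snd)
  exact hk.integral_prod_right'.measurable

lemma abs_Kf_le_one {f : V3 → ℝ} (hf : IsProb f) {p : V3} (hp : p ∈ sph) : |Kf f p| ≤ 1 := by
  rw [← hf.2.2, ← Real.norm_eq_abs]
  refine norm_integral_le_of_norm_le hf.1 ?_
  filter_upwards [ae_mem_sph, hf.2.1] with q hq hfq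
  rw [norm_mul, Real.norm_of_nonneg hfq, Real.norm_eq_abs]
  exact mul_le_of_le_one_left hfq (abs_kernel_le_one hp hq)

def WeakL1Tendsto (f : ℕ → V3 → ℝ) (fl : V3 → ℝ) : Prop :=
  ∀ g : V3 → ℝ, Measurable g → (∃ C : ℝ, ∀ p, |g p| ≤ C) →
    Tendsto (fun j => ∫ p, f j p * g p ∂μS) atTop (𝓝 (∫ p, fl p * g p ∂μS))

section WeakL1Tendsto

variable {f : ℕ → V3 → ℝ} {fl : V3 → ℝ}

lemma WeakL1Tendsto.tendsto_integral_mul (hweak : WeakL1Tendsto f fl) {g : V3 → ℝ}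
    (hg : Measurable g) {C : ℝ} (hC : ∀ p ∈ sph, |g p| ≤ C) :
    Tendsto (fun j => ∫ p, f j p * g p ∂μS) atTop (𝓝 (∫ p, fl p * g p ∂μS)) := by
  have hind : ∀ h : V3 → ℝ, ∫ p, h p * sph.indicator g p ∂μS = ∫ p, h p * g p ∂μS := fun h =>
    integral_congr_ae (ae_mem_sph.mono fun p hp => by simp only [indicator_of_mem hp])
  have hbdd : ∀ p, |sph.indicator g p| ≤ max C 0 := fun p => by
    by_cases hp : p ∈ sph
    · simpa only [indicator_of_mem hp] using (hC p hp).trans (le_max_left C 0)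
    · simp [indicator_of_notMem hp]
  simpa only [hind] using
    hweak (sph.indicator g) (hg.indicator measurableSet_sph) ⟨max C 0, hbdd⟩

lemma WeakL1Tendsto.tendsto_Kf (hweak : WeakL1Tendsto f fl) {p : V3} (hp : p ∈ sph) :
    Tendsto (fun j => Kf (f j) p) atTop (𝓝 (Kf fl p)) := by
  have h := hweak.tendsto_integral_mul (g := fun q => (∑ i, p i * q i) ^ 2 - 1 / 3) (by fun_prop)
    fun q hq => abs_kernel_le_one hp hq
  simpa only [Kf, mul_comm] using h

end WeakL1Tendsto

def dualIntegrand (x α t : ℝ) : ℝ := x * (t + 1) - max α 0 * exp t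

lemma dualIntegrand_le {x α : ℝ} (hx : 0 ≤ x) (hα : x ≠ 0 → 0 < α) (t : ℝ) :
    dualIntegrand x α t ≤ x * log x - x * log α := by
  rcases hx.eq_or_lt with rfl | hx
  · simp only [dualIntegrand, zero_mul, zero_sub, sub_zero, neg_nonpos]
    positivity
  have hα := hα hx.ne'
  have key := add_one_le_exp (t - log (x / α))
  rw [exp_sub, exp_log (div_pos hx hα)] at key
  have : x * (exp t / (x / α)) = α * exp t := by field_simp
  rw [dualIntegrand, max_eq_left hα.le, ← mul_sub, ← log_div hx.ne' hα.ne']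
  nlinarith [mul_le_mul_of_nonneg_left key hx.le]

lemma dualIntegrand_log_div {x α : ℝ} (hx : 0 < x) (hα : 0 < α) :
    dualIntegrand x α (log (x / α)) = x * log x - x * log α := by
  rw [dualIntegrand, max_eq_left hα.le, exp_log (div_pos hx hα), log_div hx.ne' hα.ne']
  field_simp
  ring

lemma concaveOn_dualIntegrand (x α : ℝ) : ConcaveOn ℝ univ (dualIntegrand x α) := by
  refine ((((LinearMap.mul ℝ ℝ x).concaveOn convex_univ).add_const x).sub
    (convexOn_exp.smul (le_max_right α 0))).congr fun t _ => ?_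
  simp only [dualIntegrand, Pi.sub_apply, Pi.add_apply, LinearMap.mul_apply', smul_eq_mul]
  ring

lemma max_neg_min_mem_uIcc {a b : ℝ} (ha : 0 ≤ a) (hab : a ≤ b) (t : ℝ) :
    max (-b) (min b t) ∈ uIcc (max (-a) (min a t)) t := by
  rw [mem_uIcc]
  grind

/-- Truncation of the maximiser `log (x / α)` of `dualIntegrand x α`; in the degenerate cases the
supremum is approached as `t → -∞` (`x = 0`) or as `t → ∞` (`α ≤ 0`). -/
def truncLogRatio (x α : ℝ) (n : ℕ) : ℝ :=
  if x = 0 then -n else if α ≤ 0 then n else max (-n) (min n (log (x / α)))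

lemma abs_truncLogRatio_le (x α : ℝ) (n : ℕ) : |truncLogRatio x α n| ≤ n := by
  unfold truncLogRatio
  split_ifs
  · simp
  · simp
  · exact abs_le.mpr ⟨le_max_left _ _, max_le (by simp) (min_le_left _ _)⟩

lemma measurable_truncLogRatio {X : Type*} [MeasurableSpace X] {φ a : X → ℝ}
    (hφ : Measurable φ) (ha : Measurable a) (n : ℕ) :
    Measurable fun p => truncLogRatio (φ p) (a p) n :=
  Measurable.ite (hφ (measurableSet_singleton 0)) measurable_const <|
    Measurable.ite (measurableSet_le ha measurable_const) measurable_const <| by fun_prop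

lemma monotone_dualIntegrand_truncLogRatio {x : ℝ} (hx : 0 ≤ x) (α : ℝ) :
    Monotone fun n => dualIntegrand x α (truncLogRatio x α n) := by
  refine monotone_nat_of_le_succ fun n => ?_
  rcases hx.eq_or_lt with rfl | hx
  · simp only [truncLogRatio, if_true, dualIntegrand, zero_mul, zero_sub, Nat.cast_succ]
    gcongr
    linarith
  rcases le_or_gt α 0 with hα | hα
  · simp only [truncLogRatio, if_neg hx.ne', if_pos hα, dualIntegrand, max_eq_right hα,
      zero_mul, sub_zero, Nat.cast_succ]
    gcongr
    linarith
  simp only [truncLogRatio, if_neg hx.ne', if_neg hα.not_ge]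
  -- The next truncation lies between the current one and the maximiser `log (x / α)`.
  refine le_trans ?_ ((concaveOn_dualIntegrand x α).ge_on_segment (mem_univ _) (mem_univ _)
    (x := max (-(n : ℝ)) (min (n : ℝ) (log (x / α)))) (y := log (x / α)) ?_)
  · rw [dualIntegrand_log_div hx hα]
    exact le_min le_rfl (dualIntegrand_le hx.le (fun _ => hα) _)
  · rw [segment_eq_uIcc]
    exact_mod_cast max_neg_min_mem_uIcc n.cast_nonneg (Nat.cast_le.mpr n.le_succ) _

lemma tendsto_dualIntegrand_truncLogRatio {x α : ℝ} (hx : 0 ≤ x) (hα : x ≠ 0 → 0 < α) :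
    Tendsto (fun n => dualIntegrand x α (truncLogRatio x α n)) atTop
      (𝓝 (x * log x - x * log α)) := by
  rcases hx.eq_or_lt with rfl | hx
  · simp only [truncLogRatio, if_true, dualIntegrand, zero_mul, zero_sub, sub_zero]
    have : Tendsto (fun n : ℕ => exp (-(n : ℝ))) atTop (𝓝 0) :=
      tendsto_exp_atBot.comp (tendsto_neg_atTop_atBot.comp tendsto_natCast_atTop_atTop)
    simpa using (this.const_mul (max α 0)).neg
  have hα := hα hx.ne'
  obtain ⟨N, hN⟩ := exists_nat_ge |log (x / α)|
  refine tendsto_const_nhds.congr' (eventually_atTop.mpr ⟨N, fun n hn => ?_⟩)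
  have hn : |log (x / α)| ≤ n := hN.trans (Nat.cast_le.mpr hn)
  rw [abs_le] at hn
  simp only [truncLogRatio, if_neg hx.ne', if_neg hα.not_ge]
  rw [min_eq_right hn.2, max_eq_right hn.1, dualIntegrand_log_div hx hα]

lemma tendsto_dualIntegrand_truncLogRatio_atTop {x α : ℝ} (hx : 0 < x) (hα : α ≤ 0) :
    Tendsto (fun n => dualIntegrand x α (truncLogRatio x α n)) atTop atTop := by
  simp only [truncLogRatio, if_neg hx.ne', if_pos hα, dualIntegrand, max_eq_right hα, zero_mul,
    sub_zero]
  exact (tendsto_atTop_add_const_right _ 1 tendsto_natCast_atTop_atTop).const_mul_atTop hx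

lemma iSup_dualIntegrand_truncLogRatio {x α : ℝ} (hx : 0 ≤ x)
    (hbdd : BddAbove (range fun n => dualIntegrand x α (truncLogRatio x α n))) :
    (x ≠ 0 → 0 < α) ∧ ⨆ n, dualIntegrand x α (truncLogRatio x α n) = x * log x - x * log α := by
  have hα : x ≠ 0 → 0 < α := fun hx0 => by
    by_contra! hα
    exact not_bddAbove_of_tendsto_atTop
      (tendsto_dualIntegrand_truncLogRatio_atTop (hx.lt_of_ne' hx0) hα) hbdd
  exact ⟨hα, tendsto_nhds_unique
    (tendsto_atTop_ciSup (monotone_dualIntegrand_truncLogRatio hx α) hbdd)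
    (tendsto_dualIntegrand_truncLogRatio hx hα)⟩

section MonotoneConvergence

variable {X : Type*} [MeasurableSpace X] {μ : Measure X} {u : ℕ → X → ℝ}

lemma aemeasurable_ofReal_sub (hu : ∀ n, Integrable (u n) μ) (n : ℕ) :
    AEMeasurable (fun x => ENNReal.ofReal (u n x - u 0 x)) μ :=
  ((hu n).sub (hu 0)).aemeasurable.ennreal_ofReal

lemma lintegral_iSup_ofReal_sub_lt_top (hu : ∀ n, Integrable (u n) μ)
    (h_mono : ∀ᵐ x ∂μ, Monotone fun n => u n x) {C : ℝ} (hC : ∀ n, ∫ x, u n x ∂μ ≤ C) :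
    ∫⁻ x, ⨆ n, ENNReal.ofReal (u n x - u 0 x) ∂μ < ⊤ := by
  rw [lintegral_iSup' (aemeasurable_ofReal_sub hu)
    (h_mono.mono fun x hx m n hmn => ENNReal.ofReal_le_ofReal (sub_le_sub_right (hx hmn) _))]
  refine lt_of_le_of_lt (iSup_le fun n => ?_) (ENNReal.ofReal_lt_top (r := C - ∫ x, u 0 x ∂μ))
  calc _ = ENNReal.ofReal (∫ x, u n x - u 0 x ∂μ) :=
        (ofReal_integral_eq_lintegral_ofReal ((hu n).sub (hu 0))
          (h_mono.mono fun x hx => sub_nonneg.mpr (hx n.zero_le))).symm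
    _ ≤ _ := by
        rw [integral_sub (hu n) (hu 0)]
        exact ENNReal.ofReal_le_ofReal (sub_le_sub_right (hC n) _)

lemma ae_bddAbove_of_monotone_of_integral_le (hu : ∀ n, Integrable (u n) μ)
    (h_mono : ∀ᵐ x ∂μ, Monotone fun n => u n x) {C : ℝ} (hC : ∀ n, ∫ x, u n x ∂μ ≤ C) :
    ∀ᵐ x ∂μ, BddAbove (range fun n => u n x) := by
  filter_upwards [ae_lt_top' (AEMeasurable.iSup (aemeasurable_ofReal_sub hu))
    (lintegral_iSup_ofReal_sub_lt_top hu h_mono hC).ne] with x hx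
  refine ⟨u 0 x + (⨆ n, ENNReal.ofReal (u n x - u 0 x)).toReal, ?_⟩
  rintro _ ⟨n, rfl⟩
  have := (ENNReal.ofReal_le_iff_le_toReal hx.ne).mp
    (le_iSup (fun n => ENNReal.ofReal (u n x - u 0 x)) n)
  dsimp only
  linarith

lemma ae_tendsto_iSup_of_monotone_of_integral_le (hu : ∀ n, Integrable (u n) μ)
    (h_mono : ∀ᵐ x ∂μ, Monotone fun n => u n x) {C : ℝ} (hC : ∀ n, ∫ x, u n x ∂μ ≤ C) :
    ∀ᵐ x ∂μ, Tendsto (fun n => u n x) atTop (𝓝 (⨆ n, u n x)) := by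
  filter_upwards [h_mono, ae_bddAbove_of_monotone_of_integral_le hu h_mono hC] with x h1 h2
  exact tendsto_atTop_ciSup h1 h2

lemma integrable_iSup_of_monotone_of_integral_le (hu : ∀ n, Integrable (u n) μ)
    (h_mono : ∀ᵐ x ∂μ, Monotone fun n => u n x) {C : ℝ} (hC : ∀ n, ∫ x, u n x ∂μ ≤ C) :
    Integrable (fun x => ⨆ n, u n x) μ := by
  have h_tendsto := ae_tendsto_iSup_of_monotone_of_integral_le hu h_mono hC
  have h_nonneg : 0 ≤ᵐ[μ] fun x => (⨆ n, u n x) - u 0 x := by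
    filter_upwards [h_mono, h_tendsto] with x h1 h2
    exact sub_nonneg.mpr (ge_of_tendsto' h2 fun n => h1 n.zero_le)
  have h_sub : Integrable (fun x => (⨆ n, u n x) - u 0 x) μ := by
    refine ⟨(aestronglyMeasurable_of_tendsto_ae atTop (fun n => (hu n).1) h_tendsto).sub (hu 0).1,
      (hasFiniteIntegral_iff_ofReal h_nonneg).mpr ?_⟩
    refine lt_of_le_of_lt (lintegral_mono_ae ?_) (lintegral_iSup_ofReal_sub_lt_top hu h_mono hC)
    filter_upwards [h_tendsto] with x hx
    exact le_of_tendsto' ((ENNReal.continuous_ofReal.tendsto _).comp (hx.sub_const _))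
      fun n => le_iSup (fun n => ENNReal.ofReal (u n x - u 0 x)) n
  exact (h_sub.add (hu 0)).congr (ae_of_all _ fun x => sub_add_cancel _ _)

lemma integral_iSup_le_of_monotone (hu : ∀ n, Integrable (u n) μ)
    (h_mono : ∀ᵐ x ∂μ, Monotone fun n => u n x) {C : ℝ} (hC : ∀ n, ∫ x, u n x ∂μ ≤ C) :
    ∫ x, ⨆ n, u n x ∂μ ≤ C :=
  le_of_tendsto' (integral_tendsto_of_tendsto_of_monotone hu
    (integrable_iSup_of_monotone_of_integral_le hu h_mono hC) h_mono
    (ae_tendsto_iSup_of_monotone_of_integral_le hu h_mono hC)) hC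

end MonotoneConvergence

def dualFE (f : V3 → ℝ) (η : ℝ) (g : V3 → ℝ) : ℝ :=
  ∫ p, dualIntegrand (f p) (Kf f p - η) (g p) ∂μS

section DualFE

variable {f : V3 → ℝ} {η : ℝ} {g : V3 → ℝ}

lemma measurable_max_Kf_sub_mul_exp (hf : AEStronglyMeasurable f μS) (hg : Measurable g) :
    Measurable fun p => max (Kf f p - η) 0 * exp (g p) := by
  have := measurable_Kf hf
  fun_prop

lemma ae_norm_max_Kf_sub_mul_exp_le (hf : IsProb f) {C : ℝ} (hg : ∀ p, |g p| ≤ C) :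
    ∀ᵐ p ∂μS, ‖max (Kf f p - η) 0 * exp (g p)‖ ≤ (1 + |η|) * exp C := by
  filter_upwards [ae_mem_sph] with p hp
  have hK := abs_le.mp (abs_Kf_le_one hf hp)
  rw [norm_mul, Real.norm_of_nonneg (le_max_right _ _), Real.norm_of_nonneg (exp_pos _).le]
  gcongr
  · exact max_le (by linarith [neg_abs_le η]) (by positivity)
  · exact (le_abs_self _).trans (hg p)

lemma integrable_mul_add_one (hf : IsProb f) (hgm : Measurable g) {C : ℝ}
    (hg : ∀ p, |g p| ≤ C) : Integrable (fun p => f p * (g p + 1)) μS :=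
  hf.1.mul_bdd (hgm.add_const 1).aestronglyMeasurable (c := C + 1) <| ae_of_all _ fun p =>
    (abs_add_le _ _).trans (by rw [abs_one]; linarith [hg p])

lemma integrable_max_Kf_sub_mul_exp (hf : IsProb f) (hgm : Measurable g) {C : ℝ}
    (hg : ∀ p, |g p| ≤ C) : Integrable (fun p => max (Kf f p - η) 0 * exp (g p)) μS :=
  (integrable_const _).mono' (measurable_max_Kf_sub_mul_exp hf.1.1 hgm).aestronglyMeasurable
    (ae_norm_max_Kf_sub_mul_exp_le hf hg)

lemma integrable_dualIntegrand (hf : IsProb f) (hgm : Measurable g) {C : ℝ}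
    (hg : ∀ p, |g p| ≤ C) : Integrable (fun p => dualIntegrand (f p) (Kf f p - η) (g p)) μS :=
  (integrable_mul_add_one hf hgm hg).sub (integrable_max_Kf_sub_mul_exp hf hgm hg)

lemma dualFE_eq (hf : IsProb f) (hgm : Measurable g) {C : ℝ} (hg : ∀ p, |g p| ≤ C) :
    dualFE f η g = ∫ p, f p * (g p + 1) ∂μS - ∫ p, max (Kf f p - η) 0 * exp (g p) ∂μS :=
  integral_sub (integrable_mul_add_one hf hgm hg) (integrable_max_Kf_sub_mul_exp hf hgm hg)

lemma dualFE_le_FE (hf : IsProb f) (hgm : Measurable g) {C : ℝ} (hg : ∀ p, |g p| ≤ C) :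
    (dualFE f η g : EReal) ≤ FE f η := by
  rw [FE]
  split_ifs with hF
  · refine EReal.coe_le_coe_iff.mpr (integral_mono_ae (integrable_dualIntegrand hf hgm hg) hF.2 ?_)
    filter_upwards [hf.2.1, hF.1] with p hp hpos
    exact dualIntegrand_le hp (fun hne => sub_pos.mpr (hpos hne)) _
  · exact le_top

lemma FE_le_coe_of_forall_dualFE_le (hf : IsProb f) {C : ℝ}
    (h : ∀ g : V3 → ℝ, Measurable g → (∃ C' : ℝ, ∀ p, |g p| ≤ C') → dualFE f η g ≤ C) :
    FE f η ≤ C := by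
  obtain ⟨φ, hφm, hfφ⟩ := hf.1.1
  set G : ℕ → V3 → ℝ := fun n p => truncLogRatio (φ p) (Kf f p - η) n
  have hGm : ∀ n, Measurable (G n) := fun n =>
    measurable_truncLogRatio hφm.measurable ((measurable_Kf hf.1.1).sub_const η) n
  have hGb : ∀ n p, |G n p| ≤ n := fun n p => abs_truncLogRatio_le _ _ n
  set u : ℕ → V3 → ℝ := fun n p => dualIntegrand (φ p) (Kf f p - η) (G n p)
  have hfu : ∀ n, (fun p => dualIntegrand (f p) (Kf f p - η) (G n p)) =ᵐ[μS] u n := fun n =>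
    hfφ.mono fun p hp => by simp only [u, hp]
  have hu : ∀ n, Integrable (u n) μS := fun n =>
    (integrable_dualIntegrand hf (hGm n) (hGb n)).congr (hfu n)
  have hC : ∀ n, ∫ p, u n p ∂μS ≤ C := fun n => by
    rw [← integral_congr_ae (hfu n)]
    exact h (G n) (hGm n) ⟨n, hGb n⟩
  have hφ0 : ∀ᵐ p ∂μS, 0 ≤ φ p := by
    filter_upwards [hfφ, hf.2.1] with p hp h0
    rwa [← hp]
  have h_mono : ∀ᵐ p ∂μS, Monotone fun n => u n p :=
    hφ0.mono fun p hp => monotone_dualIntegrand_truncLogRatio hp _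
  -- Bounded dual values keep `u · p` bounded a.e., which rules out `Kf f p ≤ η` where `f p ≠ 0`.
  have hlim : ∀ᵐ p ∂μS, (f p ≠ 0 → η < Kf f p) ∧
      ⨆ n, u n p = f p * log (f p) - f p * log (Kf f p - η) := by
    filter_upwards [hfφ, hφ0, ae_bddAbove_of_monotone_of_integral_le hu h_mono hC]
      with p hp hp0 hbdd
    obtain ⟨hpos, hsup⟩ := iSup_dualIntegrand_truncLogRatio hp0 hbdd
    rw [hp]
    exact ⟨fun hne => sub_pos.mp (hpos hne), hsup⟩
  have hsup := integrable_iSup_of_monotone_of_integral_le hu h_mono hC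
  rw [FE, if_pos ⟨hlim.mono fun p hp => hp.1, hsup.congr (hlim.mono fun p hp => hp.2)⟩,
    EReal.coe_le_coe_iff, ← integral_congr_ae (hlim.mono fun p hp => hp.2)]
  exact integral_iSup_le_of_monotone hu h_mono hC

lemma FE_le_of_forall_dualFE_le (hf : IsProb f) {ℓ : EReal}
    (h : ∀ g : V3 → ℝ, Measurable g → (∃ C : ℝ, ∀ p, |g p| ≤ C) → (dualFE f η g : EReal) ≤ ℓ) :
    FE f η ≤ ℓ := by
  induction ℓ using EReal.rec with
  | bot => exact absurd (h 0 measurable_const ⟨0, by simp⟩) (by simp)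
  | coe C => exact FE_le_coe_of_forall_dualFE_le hf fun g hgm hg =>
      EReal.coe_le_coe_iff.mp (h g hgm hg)
  | top => exact le_top

end DualFE

lemma WeakL1Tendsto.tendsto_dualFE {f : ℕ → V3 → ℝ} {fl : V3 → ℝ} (hweak : WeakL1Tendsto f fl)
    (hf : ∀ j, IsProb (f j)) (hfl : IsProb fl) (η : ℝ) {g : V3 → ℝ} (hgm : Measurable g)
    {C : ℝ} (hg : ∀ p, |g p| ≤ C) :
    Tendsto (fun j => dualFE (f j) η g) atTop (𝓝 (dualFE fl η g)) := by
  simp only [dualFE_eq (hf _) hgm hg, dualFE_eq hfl hgm hg]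
  have hg1 : ∀ p, |g p + 1| ≤ C + 1 := fun p =>
    (abs_add_le _ _).trans (by rw [abs_one]; linarith [hg p])
  refine (hweak _ (hgm.add_const 1) ⟨C + 1, hg1⟩).sub
    (tendsto_integral_of_dominated_convergence (fun _ => (1 + |η|) * exp C)
      (fun j => (measurable_max_Kf_sub_mul_exp (hf j).1.1 hgm).aestronglyMeasurable)
      (integrable_const _)
      (fun j => ae_norm_max_Kf_sub_mul_exp_le (hf j) hg) ?_)
  filter_upwards [ae_mem_sph] with p hp
  exact (((hweak.tendsto_Kf hp).sub_const η).max tendsto_const_nhds).mul_const _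

lemma WeakL1Tendsto.dualFE_le_liminf {f : ℕ → V3 → ℝ} {fl : V3 → ℝ} (hweak : WeakL1Tendsto f fl)
    (hf : ∀ j, IsProb (f j)) (hfl : IsProb fl) (η : ℝ) {g : V3 → ℝ} (hgm : Measurable g)
    (hg : ∃ C : ℝ, ∀ p, |g p| ≤ C) :
    (dualFE fl η g : EReal) ≤ liminf (fun j => FE (f j) η) atTop := by
  obtain ⟨C, hC⟩ := hg
  rw [← ((continuous_coe_real_ereal.tendsto _).comp
    (hweak.tendsto_dualFE hf hfl η hgm hC)).liminf_eq]
  exact liminf_le_liminf (Eventually.of_forall fun j => dualFE_le_FE (hf j) hgm hC)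

/-- `F(·,η)` is sequentially weakly-L¹ lower semicontinuous on `P(S²)`. -/
theorem stmt_1 (η : ℝ) (f : ℕ → V3 → ℝ) (fl : V3 → ℝ)
    (hf : ∀ j, IsProb (f j)) (hfl : IsProb fl)
    (hweak : ∀ g : V3 → ℝ, Measurable g → (∃ C : ℝ, ∀ p, |g p| ≤ C) →
      Tendsto (fun j => ∫ p, f j p * g p ∂μS) atTop (𝓝 (∫ p, fl p * g p ∂μS))) :
    FE fl η ≤ Filter.liminf (fun j => FE (f j) η) atTop :=
  FE_le_of_forall_dualFE_le hfl fun _ hgm hg =>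
    WeakL1Tendsto.dualFE_le_liminf hweak hf hfl η hgm hg
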